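/- arXiv:math/0504121 — 8 statements merged into one kernel-verified Lean document; each statement's English description precedes it below -/
import Mathlib

section
/- For every integer n ≥ 1 and every integer r with 0 ≤ r < n(n+1), there exist integers a and b with r = a·n + b·(n+1) and |a| + |b| ≤ n. -/
/-
Divide with remainder, r = q n + s with 0 ≤ s < n and 0 ≤ q ≤ n, so that r = (q - s) n + s (n + 1).
If here |a| + |b| exceeds n, then q < s, and the shifted representation
(q - s + n + 1) n + (s - n) (n + 1) has |a| + |b| equal to 2n + 1 minus that, hence at most n.
-/

theorem exists_mul_add_mul_succ_abs_add_abs_le {n q s : ℤ} (hs0 : 0 ≤ s) (hsn : s < n)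
    (hq0 : 0 ≤ q) (hqn : q ≤ n) :
    ∃ a b : ℤ, q * n + s = a * n + b * (n + 1) ∧ |a| + |b| ≤ n := by
  rcases le_or_gt s q with hsq | hqs
  · exact ⟨q - s, s, by ring, by rw [abs_of_nonneg (by omega), abs_of_nonneg hs0]; omega⟩
  by_cases hcost : 2 * s - q ≤ n
  · exact ⟨q - s, s, by ring, by rw [abs_of_neg (by omega), abs_of_nonneg hs0]; omega⟩
  · exact ⟨q - s + (n + 1), s - n, by ring,
      by rw [abs_of_nonneg (by omega), abs_of_neg (by omega)]; omega⟩

theorem stmt_0 (n r : ℤ) (hn : 1 ≤ n) (hr0 : 0 ≤ r) (hr : r < n * (n + 1)) :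
    ∃ a b : ℤ, r = a * n + b * (n + 1) ∧ |a| + |b| ≤ n := by
  have hn0 : 0 < n := by omega
  have hquot : r / n ≤ n :=
    Int.lt_add_one_iff.1 (Int.ediv_lt_of_lt_mul hn0 (by linarith))
  obtain ⟨a, b, hab, hcost⟩ := exists_mul_add_mul_succ_abs_add_abs_le
    (Int.emod_nonneg r hn0.ne') (Int.emod_lt_of_pos r hn0) (Int.ediv_nonneg hr0 hn0.le) hquot
  exact ⟨a, b, by rw [← hab, Int.ediv_mul_add_emod], hcost⟩
end

section
/- For every integer m ≥ 1 and all integers a, b, if m = a·(2m) + b·(2m+1) then |a| + |b| ≥ 2m. -/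
/-! Since `m = a·2m + b·(2m+1)`, we have `b ≡ m (mod 2m)` and `a ≡ -m (mod 2m+1)`. In both
congruences the residue `±m` has absolute value at most half the modulus, so it is a residue of
least absolute value: `m ≤ |b|` and `m ≤ |a|`. -/

theorem Int.abs_le_abs_of_dvd_sub {n x r : ℤ} (hdvd : n ∣ x - r) (hr : 2 * |r| ≤ |n|) :
    |r| ≤ |x| := by
  obtain ⟨t, ht⟩ := hdvd
  rcases eq_or_ne t 0 with rfl | ht0
  · rw [mul_zero, sub_eq_zero] at ht
    rw [ht]
  · have hnt : |n| ≤ |x - r| := by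
      rw [ht, abs_mul]
      exact le_mul_of_one_le_right (abs_nonneg n) (Int.one_le_abs ht0)
    linarith [abs_sub x r]

theorem stmt_1 (m a b : ℤ) (hm : 1 ≤ m) (h : m = a * (2 * m) + b * (2 * m + 1)) :
    |a| + |b| ≥ 2 * m := by
  have hm0 : |m| = m := abs_of_nonneg (by omega)
  have hb : |m| ≤ |b| :=
    Int.abs_le_abs_of_dvd_sub (n := 2 * m) ⟨-(a + b), by linear_combination -h⟩
      (by rw [hm0, abs_of_nonneg (by omega)])
  have ha : |-m| ≤ |a| :=
    Int.abs_le_abs_of_dvd_sub (n := 2 * m + 1) ⟨a + b, by linear_combination h⟩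
      (by rw [abs_neg, hm0, abs_of_nonneg (by omega)]; omega)
  rw [abs_neg, hm0] at ha
  rw [hm0] at hb
  omega
end

section
/- For every integer m ≥ 1 and all integers a, b, if m = a·(2m) + b·(2m−1) then |a| + |b| ≥ 2m − 1. -/
/-! Write `s = a + b`. Then `-b = m - 2m·s` and `a = m - (2m-1)·s`, so `-b ≡ m (mod 2m)` and
`a ≡ m (mod 2m-1)`. An integer congruent to `r` modulo `n` has absolute value at least
`min r (n - r)`, which gives `|b| ≥ m` and `|a| ≥ m - 1`. -/

theorem Int.min_le_abs_add_mul (r n k : ℤ) : min r (n - r) ≤ |r + n * k| := by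
  by_cases hr : 0 ≤ r ∧ r ≤ n
  · obtain ⟨hr0, hrn⟩ := hr
    rcases le_or_gt 0 k with hk | hk
    · calc min r (n - r) ≤ r := min_le_left _ _
        _ ≤ r + n * k := le_add_of_nonneg_right (by nlinarith)
        _ ≤ |r + n * k| := le_abs_self _
    · calc min r (n - r) ≤ n - r := min_le_right _ _
        _ ≤ -(r + n * k) := by nlinarith
        _ ≤ |r + n * k| := neg_le_abs _
  · calc min r (n - r) ≤ 0 := by omega
      _ ≤ |r + n * k| := abs_nonneg _

theorem stmt_2_general (m a b : ℤ) (h : m = a * (2 * m) + b * (2 * m - 1)) :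
    |a| + |b| ≥ 2 * m - 1 := by
  have hb := Int.min_le_abs_add_mul m (2 * m) (-(a + b))
  have ha := Int.min_le_abs_add_mul m (2 * m - 1) (-(a + b))
  rw [show m + 2 * m * -(a + b) = -b by linear_combination h, abs_neg,
    show 2 * m - m = m by ring, min_self] at hb
  rw [show m + (2 * m - 1) * -(a + b) = a by linear_combination h,
    min_eq_right (by linarith)] at ha
  linarith

theorem stmt_2 (m a b : ℤ) (hm : 1 ≤ m) (h : m = a * (2 * m) + b * (2 * m - 1)) :
    |a| + |b| ≥ 2 * m - 1 :=
  stmt_2_general m a b h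
end

section
/- For every integer m ≥ 1, the minimum of |a| + |b| over all pairs of integers (a, b) with a·(2m) + b·(2m+1) = m equals 2m. -/
-- The representatives of `r` modulo `d` nearest to `0` are `r` and `r - d`.
theorem Int.le_abs_sub_mul_of_two_mul_le {r d : ℤ} (hr : 0 ≤ r) (hd : 2 * r ≤ d) (t : ℤ) :
    r ≤ |r - t * d| := by
  rcases le_or_gt t 0 with ht | ht
  · have : t * d ≤ 0 := mul_nonpos_of_nonpos_of_nonneg ht (by linarith)
    exact le_abs.mpr (.inl (by linarith))
  · have : d ≤ t * d := le_mul_of_one_le_left (by linarith) ht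
    exact le_abs.mpr (.inr (by linarith))

theorem stmt_3 (m : ℤ) (hm : 1 ≤ m) :
    IsLeast {k : ℤ | ∃ a b : ℤ, a * (2 * m) + b * (2 * m + 1) = m ∧ k = |a| + |b|}
      (2 * m) := by
  refine ⟨⟨-m, m, by ring, by rw [abs_neg, abs_of_pos (by linarith)]; ring⟩, ?_⟩
  rintro _ ⟨a, b, h, rfl⟩
  -- `2m ≡ -(2m + 1)` and `2 (2m + 1) ≡ 1` modulo `4m + 1`, so the equation forces `b - a ≡ 2m`.
  have hsub : b - a = 2 * m - (a + b) * (4 * m + 1) := by linear_combination 2 * h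
  calc 2 * m ≤ |b - a| := hsub ▸ Int.le_abs_sub_mul_of_two_mul_le (by linarith) (by linarith) _
    _ ≤ |b| + |a| := abs_sub _ _
    _ = |a| + |b| := add_comm _ _
end

section
/- For every integer m ≥ 1, the minimum of |a| + |b| over all pairs of integers (a, b) with a·(2m) + b·(2m−1) = m equals 2m − 1. -/
/-!
Writing `s = a + b`, the equation `a * (2m) + b * (2m - 1) = m` reads `2ms - b = m`, so every solution
is `b = m(2s - 1)`, `a = s - b`. Then `|a| + |b| ≥ |b - a| = |(4m - 1)s - 2m|`, which is at least
`2m - 1` for every integer `s`; `s = 1` gives the solution `(1 - m, m)` attaining it.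
-/

namespace GeneratorLength

variable {m a b : ℤ}

lemma sub_eq_of_mul_add_mul_eq (h : a * (2 * m) + b * (2 * m - 1) = m) :
    b - a = (4 * m - 1) * (a + b) - 2 * m := by
  linear_combination (-2) * h

lemma two_mul_sub_one_le_abs_add_abs (hm : 1 ≤ m) (h : a * (2 * m) + b * (2 * m - 1) = m) :
    2 * m - 1 ≤ |a| + |b| := by
  have hdiff := sub_eq_of_mul_add_mul_eq h
  have hsub : |b - a| ≤ |a| + |b| := (abs_sub b a).trans (add_comm _ _).le
  rcases le_or_gt 1 (a + b) with hs | hs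
  · calc 2 * m - 1 ≤ (4 * m - 1) * (a + b) - 2 * m := by nlinarith
      _ = b - a := hdiff.symm
      _ ≤ |b - a| := le_abs_self _
      _ ≤ |a| + |b| := hsub
  · calc 2 * m - 1 ≤ -((4 * m - 1) * (a + b) - 2 * m) := by nlinarith
      _ = -(b - a) := by rw [hdiff]
      _ ≤ |b - a| := neg_le_abs _
      _ ≤ |a| + |b| := hsub

end GeneratorLength

theorem stmt_4 (m : ℤ) (hm : 1 ≤ m) :
    IsLeast {k : ℤ | ∃ a b : ℤ, a * (2 * m) + b * (2 * m - 1) = m ∧ k = |a| + |b|}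
      (2 * m - 1) := by
  refine ⟨⟨1 - m, m, by ring, ?_⟩, ?_⟩
  · rw [abs_of_nonpos (by linarith), abs_of_nonneg (by linarith)]
    ring
  · rintro k ⟨a, b, h, rfl⟩
    exact GeneratorLength.two_mul_sub_one_le_abs_add_abs hm h
end

section
/- For every integer k ≥ 1 there exist a finite set S ⊆ ℤ generating ℤ and an element g ∈ ℤ such that, with d the word metric on ℤ with respect to S, every h ∈ ℤ with d(0, h) > d(0, g) satisfies d(g, h) > k. -/
/-!
Take S = {2m, 2m+1} and g = m with m > k. Writing m = a·2m + b·(2m+1) forces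
b ≡ m (mod 2m), so every word for g has length at least 2m. On the other hand
m = -m·2m + m·(2m+1) = (m+1)·2m - m·(2m+1). If h - g = a·2m + b·(2m+1) with |a|, |b| < m,
adding these two expressions for g gives words for h of lengths 2m + b - a and 2m + 1 + a - b,
one of which is at most 2m. So no h within distance k of g is farther from 0 than g.
-/

def wordLengths (S : Finset ℤ) (x : ℤ) : Set ℕ :=
  {m | ∃ l : List ℤ, (∀ s ∈ l, s ∈ S ∨ -s ∈ S) ∧ l.sum = x ∧ l.length = m}

namespace wordLengths

variable {S : Finset ℤ}

theorem add_mem_add {x y : ℤ} {m n : ℕ} (hm : m ∈ wordLengths S x)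
    (hn : n ∈ wordLengths S y) :
    m + n ∈ wordLengths S (x + y) := by
  obtain ⟨l₁, hS₁, rfl, rfl⟩ := hm
  obtain ⟨l₂, hS₂, rfl, rfl⟩ := hn
  refine ⟨l₁ ++ l₂, ?_, List.sum_append, List.length_append⟩
  simpa only [List.mem_append, or_imp, forall_and] using ⟨hS₁, hS₂⟩

theorem natAbs_mem_mul {s : ℤ} (hs : s ∈ S) (c : ℤ) : c.natAbs ∈ wordLengths S (c * s) := by
  rcases c.natAbs_eq with hc | hc
  · refine ⟨List.replicate c.natAbs s, fun t ht => ?_, ?_, List.length_replicate ..⟩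
    · exact .inl (List.eq_of_mem_replicate ht ▸ hs)
    · rw [List.sum_replicate, nsmul_eq_mul, ← hc]
  · refine ⟨List.replicate c.natAbs (-s), fun t ht => ?_, ?_, List.length_replicate ..⟩
    · exact .inr (by rwa [List.eq_of_mem_replicate ht, neg_neg])
    · rw [List.sum_replicate, nsmul_eq_mul]
      linear_combination (-s) * hc

theorem natAbs_add_natAbs_mem_pair (v w a b : ℤ) :
    a.natAbs + b.natAbs ∈ wordLengths {v, w} (a * v + b * w) :=
  add_mem_add (natAbs_mem_mul (by simp) a) (natAbs_mem_mul (by simp) b)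

theorem exists_natAbs_add_natAbs_le_of_mem_pair {v w x : ℤ} {m : ℕ}
    (hm : m ∈ wordLengths {v, w} x) :
    ∃ a b : ℤ, a * v + b * w = x ∧ a.natAbs + b.natAbs ≤ m := by
  obtain ⟨l, hS, rfl, rfl⟩ := hm
  induction l with
  | nil => exact ⟨0, 0, by simp, by simp⟩
  | cons t l ih =>
    obtain ⟨a, b, hsum, hlen⟩ := ih fun s hs => hS s (List.mem_cons_of_mem _ hs)
    have ht : t = v ∨ t = w ∨ t = -v ∨ t = -w := by
      have := hS t List.mem_cons_self
      simp only [Finset.mem_insert, Finset.mem_singleton] at this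
      omega
    simp only [List.sum_cons, List.length_cons]
    rcases ht with rfl | rfl | rfl | rfl
    · exact ⟨a + 1, b, by rw [← hsum]; ring, by omega⟩
    · exact ⟨a, b + 1, by rw [← hsum]; ring, by omega⟩
    · exact ⟨a - 1, b, by rw [← hsum]; ring, by omega⟩
    · exact ⟨a, b - 1, by rw [← hsum]; ring, by omega⟩

end wordLengths

theorem AddSubgroup.closure_pair_add_one (n : ℤ) :
    AddSubgroup.closure (({n, n + 1} : Finset ℤ) : Set ℤ) = ⊤ := by
  rw [AddSubgroup.eq_top_iff']
  intro x
  have hone : (1 : ℤ) ∈ AddSubgroup.closure (({n, n + 1} : Finset ℤ) : Set ℤ) := by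
    simpa using AddSubgroup.sub_mem _ (AddSubgroup.subset_closure (by simp : n + 1 ∈ _))
      (AddSubgroup.subset_closure (by simp : n ∈ _))
  simpa using AddSubgroup.zsmul_mem _ hone x

theorem two_mul_le_natAbs_add_natAbs {m a b : ℤ} (hm : 0 < m)
    (h : a * (2 * m) + b * (2 * m + 1) = m) : 2 * m ≤ a.natAbs + b.natAbs := by
  have hb : b = m - (a + b) * (2 * m) := by linear_combination h
  rcases lt_trichotomy (a + b) 0 with hc | hc | hc
  · have : (a + b) * (2 * m) ≤ -(2 * m) := by nlinarith
    omega
  · rw [hc, zero_mul, sub_zero] at hb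
    omega
  · have : 2 * m ≤ (a + b) * (2 * m) := by nlinarith
    omega

theorem exists_coeffs_add_self_natAbs_add_natAbs_le {m a b : ℤ} (ha : a.natAbs < m)
    (hb : b.natAbs < m) :
    ∃ a' b' : ℤ, a' * (2 * m) + b' * (2 * m + 1) = m + (a * (2 * m) + b * (2 * m + 1)) ∧
      a'.natAbs + b'.natAbs ≤ 2 * m := by
  rcases le_or_gt b a with hba | hab
  · exact ⟨a - m, b + m, by ring, by omega⟩
  · exact ⟨a + m + 1, b - m, by ring, by omega⟩

theorem stmt_9_general (k : ℤ) :
    ∃ (S : Finset ℤ) (g : ℤ), AddSubgroup.closure (S : Set ℤ) = ⊤ ∧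
      ∀ d : ℤ → ℤ → ℕ,
        (∀ x y : ℤ,
          IsLeast {m : ℕ | ∃ l : List ℤ, (∀ s ∈ l, s ∈ S ∨ -s ∈ S) ∧
            l.sum = y - x ∧ l.length = m} (d x y)) →
        ∀ h : ℤ, (d 0 h : ℤ) > (d 0 g : ℤ) → (d g h : ℤ) > k := by
  set m := |k| + 1
  refine ⟨{2 * m, 2 * m + 1}, m, AddSubgroup.closure_pair_add_one _, fun d hd h hgt => ?_⟩
  change ∀ x y, IsLeast (wordLengths _ (y - x)) (d x y) at hd
  by_contra! hnear
  obtain ⟨a₀, b₀, hg, hg_len⟩ :=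
    wordLengths.exists_natAbs_add_natAbs_le_of_mem_pair (hd 0 m).1
  have hg_long := two_mul_le_natAbs_add_natAbs (by positivity) (hg.trans (sub_zero m))
  obtain ⟨a, b, hstep, hstep_len⟩ :=
    wordLengths.exists_natAbs_add_natAbs_le_of_mem_pair (hd m h).1
  have hk := le_abs_self k
  obtain ⟨a', b', hh, hh_len⟩ :=
    exists_coeffs_add_self_natAbs_add_natAbs_le (m := m) (a := a) (b := b) (by omega) (by omega)
  have hshort : a'.natAbs + b'.natAbs ∈ wordLengths {2 * m, 2 * m + 1} (h - 0) := by
    rw [show h - 0 = a' * (2 * m) + b' * (2 * m + 1) by rw [hh, hstep]; ring]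
    exact wordLengths.natAbs_add_natAbs_mem_pair _ _ a' b'
  have := (hd 0 h).2 hshort
  omega

/-- For every k there is a finite generating set of ℤ and an element of
dead-end depth greater than k. -/
theorem stmt_9 (k : ℤ) (hk : 1 ≤ k) :
    ∃ (S : Finset ℤ) (g : ℤ), AddSubgroup.closure (S : Set ℤ) = ⊤ ∧
      ∀ d : ℤ → ℤ → ℕ,
        (∀ x y : ℤ,
          IsLeast {m : ℕ | ∃ l : List ℤ, (∀ s ∈ l, s ∈ S ∨ -s ∈ S) ∧
            l.sum = y - x ∧ l.length = m} (d x y)) →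
        ∀ h : ℤ, (d 0 h : ℤ) > (d 0 g : ℤ) → (d g h : ℤ) > k :=
  stmt_9_general k
end

section
/- For every integer m ≥ 2, the dead-end depth of the element m in ℤ with respect to the generating set {2m, 2m+1} is at least 2m − 1. That is, with d the word metric for {2m, 2m+1}, every integer h with d(0, h) > d(0, m) satisfies d(m, h) ≥ 2m − 1. -/
/-!
Write `d` for the word metric of `{2m, 2m+1}`. The element `m` has length exactly `2m`, while
every `r` with `|r| < 2m(2m+1)` has length at most `2m`; so an `h` farther from `0` than `m`
satisfies `|h| ≥ 2m(2m+1)`. Since each generator moves by at most `2m+1`,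
`d(m, h) ≥ |h - m| / (2m+1)`, and `|h - m| ≥ 2m(2m+1) - m > (2m-2)(2m+1)`.
-/

lemma abs_le_mul_of_eq_mul_add_mul {p q a b n : ℤ} (hp : 0 ≤ p) (hpq : p ≤ q)
    (h : n = a * p + b * q) : |n| ≤ (|a| + |b|) * q :=
  calc |n| ≤ |a * p| + |b * q| := h ▸ abs_add_le _ _
    _ = |a| * p + |b| * q := by
      rw [abs_mul, abs_mul, abs_of_nonneg hp, abs_of_nonneg (hp.trans hpq)]
    _ ≤ (|a| + |b|) * q := by nlinarith [abs_nonneg a]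

lemma exists_eq_mul_add_mul_succ_of_nonneg_of_lt {n h : ℤ} (hn : 0 ≤ n) (h0 : 0 ≤ h)
    (hlt : h < n * (n + 1)) : ∃ a b : ℤ, h = a * n + b * (n + 1) ∧ |a| + |b| ≤ n := by
  obtain ⟨k, s, hks, hs0, hsn, hk0, hkn⟩ :
      ∃ k s : ℤ, h = k * (n + 1) - s ∧ 0 ≤ s ∧ s ≤ n ∧ 0 ≤ k ∧ k ≤ n := by
    refine ⟨(h + n) / (n + 1), n - (h + n) % (n + 1), ?_, ?_, ?_, ?_, ?_⟩
    · linarith [Int.mul_ediv_add_emod (h + n) (n + 1)]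
    · linarith [Int.emod_lt_of_pos (h + n) (by linarith : 0 < n + 1)]
    · linarith [Int.emod_nonneg (h + n) (by linarith : n + 1 ≠ 0)]
    · exact Int.ediv_nonneg (by linarith) (by linarith)
    · exact Int.lt_add_one_iff.mp <| Int.ediv_lt_of_lt_mul (by linarith) (by linarith)
  by_cases hc : 2 * s - k ≤ n
  · refine ⟨s, k - s, by rw [hks]; ring, ?_⟩
    rw [abs_of_nonneg hs0]
    cases abs_cases (k - s) <;> linarith
  · -- trade `n + 1` copies of `n` for `n` copies of `n + 1`
    refine ⟨s - (n + 1), k - s + n, by rw [hks]; ring, ?_⟩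
    rw [abs_of_nonpos (by linarith), abs_of_nonneg (by linarith)]
    linarith

lemma exists_eq_mul_add_mul_succ_of_abs_lt {n h : ℤ} (hn : 0 ≤ n) (hlt : |h| < n * (n + 1)) :
    ∃ a b : ℤ, h = a * n + b * (n + 1) ∧ |a| + |b| ≤ n := by
  rcases le_or_gt 0 h with h0 | h0
  · exact exists_eq_mul_add_mul_succ_of_nonneg_of_lt hn h0 (by rwa [abs_of_nonneg h0] at hlt)
  · obtain ⟨a, b, he, hc⟩ := exists_eq_mul_add_mul_succ_of_nonneg_of_lt hn
      (neg_nonneg.mpr h0.le) (by rwa [abs_of_neg h0] at hlt)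
    exact ⟨-a, -b, by linarith, by rwa [abs_neg, abs_neg]⟩

lemma two_mul_le_abs_add_abs {m a b : ℤ} (hm : 0 ≤ m) (h : m = a * (2 * m) + b * (2 * m + 1)) :
    2 * m ≤ |a| + |b| := by
  have hb : b = m - 2 * m * (a + b) := by linarith
  rcases le_or_gt (a + b) 0 with ht | ht
  · have : m ≤ b := by nlinarith
    rw [abs_of_nonneg (by linarith : 0 ≤ b)]
    cases abs_cases a <;> linarith
  · have : b ≤ -m := by nlinarith
    rw [abs_of_nonpos (by linarith : b ≤ 0)]
    cases abs_cases a <;> linarith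

theorem stmt_10 (m : ℤ) (hm : 2 ≤ m) (d : ℤ → ℤ → ℤ)
    (hd : ∀ x y : ℤ,
      IsLeast {k : ℤ | ∃ a b : ℤ, y - x = a * (2 * m) + b * (2 * m + 1) ∧
        k = |a| + |b|} (d x y)) :
    ∀ h : ℤ, d 0 h > d 0 m → d m h ≥ 2 * m - 1 := by
  intro h hgt
  have hdm : d 0 m = 2 * m := by
    refine (hd 0 m).unique
      ⟨⟨-m, m, by ring, by rw [abs_neg, abs_of_nonneg (by linarith)]; ring⟩, ?_⟩
    rintro k ⟨a, b, he, rfl⟩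
    exact two_mul_le_abs_add_abs (by linarith) (by linarith)
  have hlarge : 2 * m * (2 * m + 1) ≤ |h| := by
    by_contra! hlt
    obtain ⟨a, b, he, hc⟩ := exists_eq_mul_add_mul_succ_of_abs_lt (by linarith) hlt
    have := (hd 0 h).2 ⟨a, b, by rw [sub_zero, he], rfl⟩
    omega
  obtain ⟨a, b, he, hk⟩ := (hd m h).1
  have hstep : |h - m| ≤ d m h * (2 * m + 1) :=
    hk ▸ abs_le_mul_of_eq_mul_add_mul (by linarith) (by linarith) he
  have hfar : 2 * m * (2 * m + 1) - m ≤ |h - m| := by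
    linarith [abs_sub_abs_le_abs_sub h m, abs_of_nonneg (by linarith : 0 ≤ m)]
  nlinarith
end

section
/- For all integers n ≥ 1 and q, r with |q| + |r| ≤ n, there exists a lattice path in ℤ² from (0, 0) to (q, r) of length at most 4n that meets every line x + y = i for each i ∈ {−n, ..., n}, where length is the number of unit ℓ¹-steps. -/
/-!
The path runs from the origin down to the line `x + y = -n`, then up to the line `x + y = n`,
and finally back down to `(q, r)`; every leg is monotone in `x + y`, so the length is
`n + 2n + (n - (q + r)) ≤ 4n` as long as `0 ≤ q + r`. An explicit such path exists when
moreover `0 ≤ q`; the remaining points of the diamond are reached by swapping the coordinates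
or negating the path.
-/

def IsLatticePath (L : ℕ) (P : ℕ → ℤ × ℤ) : Prop :=
  ∀ j < L, |(P (j + 1)).1 - (P j).1| + |(P (j + 1)).2 - (P j).2| = 1

def MeetsDiagonals (n : ℤ) (L : ℕ) (P : ℕ → ℤ × ℤ) : Prop :=
  ∀ i : ℤ, -n ≤ i → i ≤ n → ∃ j ≤ L, (P j).1 + (P j).2 = i

def HasSweepingPath (n q r : ℤ) : Prop :=
  ∃ (L : ℕ) (P : ℕ → ℤ × ℤ), P 0 = (0, 0) ∧ P L = (q, r) ∧ IsLatticePath L P ∧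
    (L : ℤ) ≤ 4 * n ∧ MeetsDiagonals n L P

section Symmetries

variable {n : ℤ} {L : ℕ} {P : ℕ → ℤ × ℤ}

theorem IsLatticePath.swap (h : IsLatticePath L P) : IsLatticePath L (Prod.swap ∘ P) :=
  fun j hj => (add_comm _ _).trans (h j hj)

theorem IsLatticePath.neg (h : IsLatticePath L P) : IsLatticePath L (-P) := by
  intro j hj
  simpa only [Pi.neg_apply, Prod.fst_neg, Prod.snd_neg, ← neg_sub', abs_neg] using h j hj

theorem MeetsDiagonals.swap (h : MeetsDiagonals n L P) : MeetsDiagonals n L (Prod.swap ∘ P) := by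
  intro i hi hi'
  obtain ⟨j, hj, hsum⟩ := h i hi hi'
  exact ⟨j, hj, (add_comm _ _).trans hsum⟩

theorem MeetsDiagonals.neg (h : MeetsDiagonals n L P) : MeetsDiagonals n L (-P) := by
  intro i hi hi'
  obtain ⟨j, hj, hsum⟩ := h (-i) (by omega) (by omega)
  refine ⟨j, hj, ?_⟩
  simp only [Pi.neg_apply, Prod.fst_neg, Prod.snd_neg]
  omega

variable {q r : ℤ}

theorem HasSweepingPath.swap (h : HasSweepingPath n q r) : HasSweepingPath n r q := by
  obtain ⟨L, P, h0, hL, hpath, hlen, hmeet⟩ := h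
  exact ⟨L, Prod.swap ∘ P, by simp [h0], by simp [hL], hpath.swap, hlen, hmeet.swap⟩

theorem HasSweepingPath.neg (h : HasSweepingPath n q r) : HasSweepingPath n (-q) (-r) := by
  obtain ⟨L, P, h0, hL, hpath, hlen, hmeet⟩ := h
  exact ⟨L, -P, by simp [h0], by simp [hL], hpath.neg, hlen, hmeet.neg⟩

end Symmetries

/-- Down to `(0, -n)`, right to `(q, -n)`, up to `(q, n - q)`, then down towards `(q, r)`,
reached at time `4 * n - q - r`. -/
def sweepPath (n q : ℤ) (j : ℕ) : ℤ × ℤ :=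
  if (j : ℤ) ≤ n then (0, -j)
  else if (j : ℤ) ≤ n + q then (j - n, -n)
  else if (j : ℤ) ≤ 3 * n then (q, j - 2 * n - q)
  else (q, 4 * n - q - j)

section SweepPath

variable {n q r : ℤ}

theorem isLatticePath_sweepPath (hq : 0 ≤ q) (hqn : q ≤ n) (L : ℕ) :
    IsLatticePath L (sweepPath n q) := by
  intro j _
  simp only [sweepPath]
  push_cast
  split_ifs <;> simp only [Int.abs_eq_natAbs] <;> omega

theorem meetsDiagonals_sweepPath (hqn : q ≤ n) {L : ℕ} (hL : 3 * n ≤ L) :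
    MeetsDiagonals n L (sweepPath n q) := by
  intro i hi hi'
  -- `x + y = -j` on the first leg and `x + y = j - 2 * n` on the third one
  obtain ⟨j, hj⟩ : ∃ j : ℕ, (j : ℤ) = if i ≤ 0 then -i else i + 2 * n :=
    ⟨_, Int.toNat_of_nonneg (by split_ifs <;> omega)⟩
  refine ⟨j, by split_ifs at hj <;> omega, ?_⟩
  simp only [sweepPath]
  split_ifs at hj ⊢ <;> omega

theorem hasSweepingPath_of_nonneg (hq : 0 ≤ q) (hqn : q ≤ n) (hr : -q ≤ r) (hrn : r ≤ n - q) :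
    HasSweepingPath n q r := by
  obtain ⟨L, hL⟩ : ∃ L : ℕ, (L : ℤ) = 4 * n - q - r :=
    ⟨_, Int.toNat_of_nonneg (by omega)⟩
  refine ⟨L, sweepPath n q, by simp [sweepPath]; omega, ?_, isLatticePath_sweepPath hq hqn L,
    by omega, meetsDiagonals_sweepPath hqn (by omega)⟩
  refine Prod.ext ?_ ?_ <;> simp only [sweepPath] <;> split_ifs <;> omega

theorem hasSweepingPath_of_nonneg_add (hqr : |q| + |r| ≤ n) (hs : 0 ≤ q + r) :
    HasSweepingPath n q r := by
  rcases le_or_gt 0 q with hq | hq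
  · exact hasSweepingPath_of_nonneg hq (by grind) (by omega) (by grind)
  · exact (hasSweepingPath_of_nonneg (by omega) (by grind) (by omega) (by grind)).swap

end SweepPath

theorem stmt_17_general (n q r : ℤ) (hqr : |q| + |r| ≤ n) :
    ∃ (L : ℕ) (P : ℕ → ℤ × ℤ),
      P 0 = (0, 0) ∧ P L = (q, r) ∧
      (∀ j < L, |(P (j + 1)).1 - (P j).1| + |(P (j + 1)).2 - (P j).2| = 1) ∧
      (L : ℤ) ≤ 4 * n ∧
      (∀ i : ℤ, -n ≤ i → i ≤ n → ∃ j ≤ L, (P j).1 + (P j).2 = i) := by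
  show HasSweepingPath n q r
  rcases le_or_gt 0 (q + r) with hs | hs
  · exact hasSweepingPath_of_nonneg_add hqr hs
  · simpa only [neg_neg] using
      (hasSweepingPath_of_nonneg_add (q := -q) (r := -r) (by simpa using hqr) (by omega)).neg

theorem stmt_17 (n q r : ℤ) (hn : 1 ≤ n) (hqr : |q| + |r| ≤ n) :
    ∃ (L : ℕ) (P : ℕ → ℤ × ℤ),
      P 0 = (0, 0) ∧ P L = (q, r) ∧
      (∀ j < L, |(P (j + 1)).1 - (P j).1| + |(P (j + 1)).2 - (P j).2| = 1) ∧
      (L : ℤ) ≤ 4 * n ∧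
      (∀ i : ℤ, -n ≤ i → i ≤ n → ∃ j ≤ L, (P j).1 + (P j).2 = i) :=
  stmt_17_general n q r hqr
end
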